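/- arXiv:1805.08627 — 2 statements merged into one kernel-verified Lean document; each statement's English description precedes it below -/
import Mathlib

section
/- In any commutative ring R with invertible elements p, q and an element r, the structure (R, ∘, /, *, //) with a∘b = pa+qb, a/b = p⁻¹a − p⁻¹qb, a*b = pa+rb, a//b = p⁻¹a − p⁻¹rb and a_n = ((1−p)q⁻¹)^{n−1} satisfies all seven axioms (A)–(G) of a generalized Conway algebra. -/
/-- In any commutative ring `R` with invertible elements `p, q` and an element `r`,
the operations `a∘b = pa+qb`, `a/b = p⁻¹a − p⁻¹qb`, `a*b = pa+rb`,
`a//b = p⁻¹a − p⁻¹rb` together with `a_n = ((1−p)q⁻¹)^{n−1}` satisfy all seven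
axioms (A)–(G) of a generalized Conway algebra. -/
theorem stmt5 {R : Type*} [CommRing R] (p q : Rˣ) (r : R) :
    let circ : R → R → R := fun a b => p * a + q * b
    let div : R → R → R := fun a b => (↑p⁻¹ : R) * a - (↑p⁻¹ : R) * q * b
    let star : R → R → R := fun a b => p * a + r * b
    let ddiv : R → R → R := fun a b => (↑p⁻¹ : R) * a - (↑p⁻¹ : R) * r * b
    let aseq : ℕ → R := fun n => ((1 - (p : R)) * (↑q⁻¹ : R)) ^ (n - 1)
    -- (A)
    (∀ a b : R, div (circ a b) b = a ∧ circ (div a b) b = a ∧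
        ddiv (star a b) b = a ∧ star (ddiv a b) b = a) ∧
    -- (B)
    (∀ n : ℕ, 1 ≤ n → aseq n = circ (aseq n) (aseq (n + 1))) ∧
    -- (C)
    (∀ a b c d : R, circ (circ a b) (circ c d) = circ (circ a c) (circ b d)) ∧
    -- (D)
    (∀ a b c d : R, star (star a b) (star c d) = star (star a c) (star b d)) ∧
    -- (E)
    (∀ a b c d : R, circ (circ a b) (star c d) = circ (circ a c) (star b d)) ∧
    -- (F)
    (∀ a b c d : R, star (star a b) (circ c d) = star (star a c) (circ b d)) ∧
    -- (G)
    (∀ a b c d : R, star (circ a b) (circ c d) = circ (star a c) (star b d)) := by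
  intro circ div star ddiv aseq
  have hp : (↑p⁻¹ : R) * p = 1 := by exact_mod_cast p.inv_mul
  have hq : (q : R) * ↑q⁻¹ = 1 := by exact_mod_cast q.mul_inv
  refine ⟨?_, ?_, ?_, ?_, ?_, ?_, ?_⟩
  · intro a b
    refine ⟨?_, ?_, ?_, ?_⟩ <;> simp only [circ, div, star, ddiv]
    · linear_combination a * hp
    · linear_combination (a - (q:R) * b) * hp
    · linear_combination a * hp
    · linear_combination (a - r * b) * hp
  · intro n hn
    obtain ⟨m, rfl⟩ := Nat.exists_eq_add_of_le hn
    simp only [aseq, circ, Nat.add_sub_cancel_left, Nat.add_sub_cancel, add_comm 1 m, pow_succ]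
    linear_combination (-(((1 - (p:R)) * ↑q⁻¹) ^ m) * (1 - (p:R))) * hq
  all_goals intro a b c d; simp only [circ, star]; ring
end

section
/- In the Laurent polynomial ring Z[v^{±1}, z, w^{±1}], with operations a∘b = v²a + vwb, a/b = v⁻²a − v⁻¹wb, a*b = v²a + vzb, a//b = v⁻²a − v⁻¹zb, and a_n = ((v⁻¹−v)/w)^{n−1}, all axioms (A)–(G) of a generalized Conway algebra hold. -/
open LaurentPolynomial Polynomial

noncomputable section

/-- The ring `ℤ[v^{±1}, z, w^{±1}]`, realized as Laurent polynomials in `v` and `w`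
over the polynomial ring `ℤ[z]`. -/
abbrev B : Type := LaurentPolynomial (LaurentPolynomial (Polynomial ℤ))

/-- The invertible variable `v`. -/
def v : B := T 1
/-- The inverse `v⁻¹`. -/
def vI : B := T (-1)
/-- The invertible variable `w`. -/
def w : B := C (T 1)
/-- The inverse `w⁻¹`. -/
def wI : B := C (T (-1))
/-- The variable `z`. -/
def z : B := C (C X)

/-- The sequence `a_n = ((v⁻¹ − v)w⁻¹)^{n−1}`. -/
def aseq (n : ℕ) : B := ((vI - v) * wI) ^ (n - 1)

/-- In `ℤ[v^{±1}, z, w^{±1}]` with `a∘b = v²a + vwb`, `a/b = v⁻²a − v⁻¹wb`,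
`a*b = v²a + vzb`, `a//b = v⁻²a − v⁻¹zb` and `a_n = ((v⁻¹−v)/w)^{n−1}`, all
axioms (A)–(G) of a generalized Conway algebra hold. -/
theorem stmt7 :
    let circ : B → B → B := fun a b => v ^ 2 * a + v * w * b
    let div : B → B → B := fun a b => vI ^ 2 * a - vI * w * b
    let star : B → B → B := fun a b => v ^ 2 * a + v * z * b
    let ddiv : B → B → B := fun a b => vI ^ 2 * a - vI * z * b
    -- (A)
    (∀ a b : B, div (circ a b) b = a ∧ circ (div a b) b = a ∧
        ddiv (star a b) b = a ∧ star (ddiv a b) b = a) ∧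
    -- (B)
    (∀ n : ℕ, 1 ≤ n → aseq n = circ (aseq n) (aseq (n + 1))) ∧
    -- (C)
    (∀ a b c d : B, circ (circ a b) (circ c d) = circ (circ a c) (circ b d)) ∧
    -- (D)
    (∀ a b c d : B, star (star a b) (star c d) = star (star a c) (star b d)) ∧
    -- (E)
    (∀ a b c d : B, circ (circ a b) (star c d) = circ (circ a c) (star b d)) ∧
    -- (F)
    (∀ a b c d : B, star (star a b) (circ c d) = star (star a c) (circ b d)) ∧
    -- (G)
    (∀ a b c d : B, star (circ a b) (circ c d) = circ (star a c) (star b d)) := by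
  have hv : v * vI = 1 := by rw [v, vI, ← T_add]; norm_num
  have hw : w * wI = 1 := by rw [w, wI, ← map_mul, ← T_add]; norm_num
  intro circ div star ddiv
  refine ⟨?_, ?_, ?_, ?_, ?_, ?_, ?_⟩
  · intro a b
    refine ⟨?_, ?_, ?_, ?_⟩ <;> simp only [circ, div, star, ddiv]
    · linear_combination ((v * vI + 1) * a + vI * w * b) * hv
    · linear_combination ((v * vI + 1) * a - v * w * b) * hv
    · linear_combination ((v * vI + 1) * a + vI * z * b) * hv
    · linear_combination ((v * vI + 1) * a - v * z * b) * hv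
  · intro n hn
    simp only [circ, aseq]
    have h1 : n + 1 - 1 = (n - 1) + 1 := by omega
    rw [h1, pow_succ]
    set P : B := ((vI - v) * wI) ^ (n - 1)
    linear_combination (-P) * hv + (-(P * v * (vI - v))) * hw
  all_goals intro a b c d; simp only [circ, star]; ring
end
end
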